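/- Lower bound of the augmented Lagrangian: if ℓ has L-Lipschitz gradient, ρ ≥ L, and λᵢ = −Bᵢᵀ∇ℓ(x̄) for all i, then L_ρ(x, x̄, λ) := ∑ᵢ g(xᵢ) + ℓ(x̄) + ∑ᵢ λᵢᵀ(x̄ᵢ − xᵢ) + (ρ/2)∑ᵢ‖x̄ᵢ − xᵢ‖² ≥ ∑ᵢ g(xᵢ) + ℓ(∑ᵢ Bᵢxᵢ) + ((ρ−L)/2)∑ᵢ‖x̄ᵢ − xᵢ‖². -/

import Mathlib

open RealInnerProductSpace Filter

/-- Block embedding of `ℝ^H` into the `i`-th coordinate block of `ℝ^(N·H)`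
(positions `i*H` to `(i+1)*H - 1`), zeros elsewhere. -/
noncomputable def Bemb {N H : ℕ} (i : Fin N) (x : EuclideanSpace ℝ (Fin H)) :
    EuclideanSpace ℝ (Fin (N * H)) :=
  WithLp.toLp 2 fun k =>
    if h : (i : ℕ) * H ≤ (k : ℕ) ∧ (k : ℕ) < ((i : ℕ) + 1) * H then
      x ⟨(k : ℕ) - (i : ℕ) * H, by
        obtain ⟨h1, h2⟩ := h
        rw [Nat.succ_mul] at h2
        omega⟩
    else 0

/-- `Bᵢᵀ` : extraction of the `i`-th coordinate block of `ℝ^(N·H)`. -/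
noncomputable def BembT {N H : ℕ} (i : Fin N) (z : EuclideanSpace ℝ (Fin (N * H))) :
    EuclideanSpace ℝ (Fin H) :=
  WithLp.toLp 2 fun t => z ⟨(i : ℕ) * H + (t : ℕ), by
    have h1 : (i : ℕ) + 1 ≤ N := i.isLt
    calc (i : ℕ) * H + (t : ℕ) < (i : ℕ) * H + H := by omega
    _ = ((i : ℕ) + 1) * H := (Nat.succ_mul _ _).symm
    _ ≤ N * H := Nat.mul_le_mul_right _ h1⟩

/-!
Write `z̄ = ∑ Bᵢ x̄ᵢ` and `z = ∑ Bᵢ xᵢ`. The blocks `Bᵢ` are isometric embeddings onto mutually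
orthogonal coordinate blocks, with adjoints `Bᵢᵀ`, so `∑ᵢ ⟪λᵢ, x̄ᵢ - xᵢ⟫ = ⟪∇ℓ z̄, z - z̄⟫` and
`∑ᵢ ‖x̄ᵢ - xᵢ‖² = ‖z - z̄‖²`. The difference of the two sides is then
`ℓ z̄ + ⟪∇ℓ z̄, z - z̄⟫ + (L/2)‖z - z̄‖² - ℓ z`, which is nonnegative by the descent lemma.
-/

section Descent

variable {E : Type*} [NormedAddCommGroup E] [InnerProductSpace ℝ E] [CompleteSpace E]

lemma hasDerivAt_comp_add_smul {f : E → ℝ} {x v : E} {t : ℝ}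
    (hf : DifferentiableAt ℝ f (x + t • v)) :
    HasDerivAt (fun s : ℝ => f (x + s • v)) ⟪gradient f (x + t • v), v⟫ t := by
  have hline : HasDerivAt (fun s : ℝ => x + s • v) v t := by
    simpa using ((hasDerivAt_id t).smul_const v).const_add x
  rw [inner_gradient_left]
  exact hf.hasFDerivAt.comp_hasDerivAt t hline

lemma descent_lemma {f : E → ℝ} (hf : Differentiable ℝ f) {L : ℝ}
    (hLip : ∀ a b, ‖gradient f a - gradient f b‖ ≤ L * ‖a - b‖) (x y : E) :
    f y ≤ f x + ⟪gradient f x, y - x⟫ + L / 2 * ‖y - x‖ ^ 2 := by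
  obtain ⟨v, rfl⟩ : ∃ v, y = x + v := ⟨y - x, (add_sub_cancel x y).symm⟩
  rw [add_sub_cancel_left]
  let φ : ℝ → ℝ := fun t => f (x + t • v) - t * ⟪gradient f x, v⟫ - L / 2 * t ^ 2 * ‖v‖ ^ 2
  let φ' : ℝ → ℝ := fun t =>
    ⟪gradient f (x + t • v), v⟫ - ⟪gradient f x, v⟫ - L * t * ‖v‖ ^ 2
  have hφ : ∀ t, HasDerivAt φ (φ' t) t := fun t =>
    (((hasDerivAt_comp_add_smul (hf _)).sub ((hasDerivAt_id t).mul_const _)).sub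
      (((hasDerivAt_pow 2 t).const_mul (L / 2)).mul_const _)).congr_deriv (by simp only [φ']; ring)
  have hφ'_nonpos : ∀ t ∈ interior (Set.Ici (0 : ℝ)), φ' t ≤ 0 := fun t ht => by
    rw [interior_Ici, Set.mem_Ioi] at ht
    have hgrad : ‖gradient f (x + t • v) - gradient f x‖ ≤ L * (t * ‖v‖) := by
      simpa [norm_smul, abs_of_pos ht] using hLip (x + t • v) x
    have hinner := real_inner_le_norm (gradient f (x + t • v) - gradient f x) v
    rw [inner_sub_left] at hinner
    simp only [φ']
    nlinarith [norm_nonneg v]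
  have hanti : AntitoneOn φ (Set.Ici 0) :=
    antitoneOn_of_hasDerivWithinAt_nonpos (convex_Ici 0)
      (fun t _ => (hφ t).continuousAt.continuousWithinAt)
      (fun t _ => (hφ t).hasDerivWithinAt) hφ'_nonpos
  have h01 := hanti Set.self_mem_Ici (zero_le_one' ℝ) zero_le_one
  simp only [φ, one_smul, zero_smul, add_zero] at h01
  linarith

end Descent

section BlockEmbedding

variable {N H : ℕ}

lemma finProdFinEquiv_val_eq {m n : ℕ} (i : Fin m) (t : Fin n) :
    (finProdFinEquiv (i, t) : ℕ) = i * n + t := by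
  rw [finProdFinEquiv_apply_val]; ring

lemma Bemb_apply_finProdFinEquiv (i j : Fin N) (w : EuclideanSpace ℝ (Fin H)) (t : Fin H) :
    Bemb j w (finProdFinEquiv (i, t)) = if i = j then w t else 0 := by
  have hk := finProdFinEquiv_val_eq i t
  by_cases hij : i = j
  · subst hij
    have hcond : (i : ℕ) * H ≤ i * H + t ∧ (i : ℕ) * H + t < (i + 1) * H := by
      constructor <;> nlinarith [t.isLt]
    simp only [Bemb, hk, hcond, and_self, dite_true, if_true, Nat.add_sub_cancel_left]
  · have hcond : ¬ ((j : ℕ) * H ≤ i * H + t ∧ (i : ℕ) * H + t < (j + 1) * H) := by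
      rintro ⟨hlo, hhi⟩
      have hji : (j : ℕ) < i + 1 := Nat.lt_of_mul_lt_mul_right (a := H) (by nlinarith [t.isLt])
      have hij' : (i : ℕ) < j + 1 := Nat.lt_of_mul_lt_mul_right (a := H) (by nlinarith)
      exact hij (Fin.ext (by omega))
    simp [Bemb, hk, hcond, hij]

lemma BembT_apply (i : Fin N) (z : EuclideanSpace ℝ (Fin (N * H))) (t : Fin H) :
    BembT i z t = z (finProdFinEquiv (i, t)) := by
  simp only [BembT]
  exact congrArg z.ofLp (Fin.ext (finProdFinEquiv_val_eq i t).symm)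

lemma inner_sum_Bemb (z : EuclideanSpace ℝ (Fin (N * H))) (v : Fin N → EuclideanSpace ℝ (Fin H)) :
    ⟪z, ∑ j, Bemb j (v j)⟫ = ∑ i, ⟪BembT i z, v i⟫ := by
  simp only [PiLp.inner_apply, RCLike.inner_apply, conj_trivial, WithLp.ofLp_sum, Finset.sum_apply]
  rw [← finProdFinEquiv.sum_comp, Fintype.sum_prod_type]
  simp [Bemb_apply_finProdFinEquiv, BembT_apply]

lemma BembT_sum_Bemb (i : Fin N) (v : Fin N → EuclideanSpace ℝ (Fin H)) :
    BembT i (∑ j, Bemb j (v j)) = v i := by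
  ext t
  simp [BembT_apply, WithLp.ofLp_sum, Bemb_apply_finProdFinEquiv]

lemma norm_sum_Bemb_sq (v : Fin N → EuclideanSpace ℝ (Fin H)) :
    ‖∑ j, Bemb j (v j)‖ ^ 2 = ∑ i, ‖v i‖ ^ 2 := by
  simp only [← real_inner_self_eq_norm_sq, inner_sum_Bemb, BembT_sum_Bemb]

lemma Bemb_sub (i : Fin N) (a b : EuclideanSpace ℝ (Fin H)) :
    Bemb i (a - b) = Bemb i a - Bemb i b := by
  ext k
  simp only [Bemb, PiLp.sub_apply]
  split <;> simp

end BlockEmbedding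

theorem augmented_lagrangian_lower_bound_general (N H : ℕ) (L ρ : ℝ)
    (g : EuclideanSpace ℝ (Fin H) → ℝ)
    (ℓ : EuclideanSpace ℝ (Fin (N * H)) → ℝ) (hℓ : Differentiable ℝ ℓ)
    (hLip : ∀ a b, ‖gradient ℓ a - gradient ℓ b‖ ≤ L * ‖a - b‖)
    (x xb : Fin N → EuclideanSpace ℝ (Fin H))
    (lam : Fin N → EuclideanSpace ℝ (Fin H))
    (hlam : ∀ i, lam i = -(BembT i (gradient ℓ (∑ j : Fin N, Bemb j (xb j))))) :
    (∑ i : Fin N, g (x i)) + ℓ (∑ j : Fin N, Bemb j (xb j)) +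
        (∑ i : Fin N, ⟪lam i, xb i - x i⟫) + ρ / 2 * ∑ i : Fin N, ‖xb i - x i‖ ^ 2 ≥
      (∑ i : Fin N, g (x i)) + ℓ (∑ j : Fin N, Bemb j (x j)) +
        (ρ - L) / 2 * ∑ i : Fin N, ‖xb i - x i‖ ^ 2 := by
  set zb := ∑ j, Bemb j (xb j)
  have hdiff : ∑ j, Bemb j (x j) - zb = ∑ j, Bemb j (x j - xb j) := by
    simp only [zb, ← Finset.sum_sub_distrib, Bemb_sub]
  have hinner : ∑ i, ⟪lam i, xb i - x i⟫ = ⟪gradient ℓ zb, ∑ j, Bemb j (x j) - zb⟫ := by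
    rw [hdiff, inner_sum_Bemb]
    refine Finset.sum_congr rfl fun i _ => ?_
    rw [hlam, inner_neg_left, ← inner_neg_right, neg_sub]
  have hnorm : ‖∑ j, Bemb j (x j) - zb‖ ^ 2 = ∑ i, ‖xb i - x i‖ ^ 2 := by
    simp only [hdiff, norm_sum_Bemb_sq, norm_sub_rev]
  have hdescent := descent_lemma hℓ hLip zb (∑ j, Bemb j (x j))
  rw [← hinner, hnorm] at hdescent
  linarith

theorem augmented_lagrangian_lower_bound (N H : ℕ) (hN : 0 < N) (hH : 0 < H) (L ρ : ℝ)
    (hρL : L ≤ ρ)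
    (g : EuclideanSpace ℝ (Fin H) → ℝ)
    (ℓ : EuclideanSpace ℝ (Fin (N * H)) → ℝ) (hℓ : Differentiable ℝ ℓ)
    (hLip : ∀ a b, ‖gradient ℓ a - gradient ℓ b‖ ≤ L * ‖a - b‖)
    (x xb : Fin N → EuclideanSpace ℝ (Fin H))
    (lam : Fin N → EuclideanSpace ℝ (Fin H))
    (hlam : ∀ i, lam i = -(BembT i (gradient ℓ (∑ j : Fin N, Bemb j (xb j))))) :
    (∑ i : Fin N, g (x i)) + ℓ (∑ j : Fin N, Bemb j (xb j)) +
        (∑ i : Fin N, ⟪lam i, xb i - x i⟫) + ρ / 2 * ∑ i : Fin N, ‖xb i - x i‖ ^ 2 ≥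
      (∑ i : Fin N, g (x i)) + ℓ (∑ j : Fin N, Bemb j (x j)) +
        (ρ - L) / 2 * ∑ i : Fin N, ‖xb i - x i‖ ^ 2 :=
  augmented_lagrangian_lower_bound_general N H L ρ g ℓ hℓ hLip x xb lam hlam
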